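/- Let l ≥ 0, let λ < 0, and let J_λ be the (l+1)×(l+1) Jordan block with all diagonal entries equal to λ, all superdiagonal entries equal to 1, and all other entries 0. Suppose A = (a_{i,j}) is a real symmetric (l+1)×(l+1) matrix such that the product A·J_λ is also symmetric. Then a_{i,j} = 0 whenever i + j ≤ l + 1, and a_{i,j} = a_{l+1,1} whenever i + j = l + 2 (i.e. all entries on the main anti-diagonal are equal). -/

import Mathlib

/-!
Write `J_λ = λ I + N` with `N` the nilpotent shift. For symmetric `A` the `λ`-terms cancel
from the symmetry of `A J_λ`, which then says `a_{i,j+1} = a_{i+1,j}` (so `A` is constant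
along anti-diagonals up to the main one) and, in the first row, `a_{1,j} = 0` for `j ≤ l`.
Sliding along anti-diagonals carries these zeros to every entry above the main
anti-diagonal, and makes the main anti-diagonal constant.
-/

namespace Matrix

def jordanBlock {R : Type*} [Zero R] [One R] (n : ℕ) (c : R) : Matrix (Fin n) (Fin n) R :=
  of fun i j => if (j : ℕ) = i then c else if (j : ℕ) = i + 1 then 1 else 0

section Semiring

variable {R : Type*} [Semiring R] {n : ℕ}

theorem mul_jordanBlock_apply_zero (c : R) (A : Matrix (Fin (n + 1)) (Fin (n + 1)) R)
    (i : Fin (n + 1)) : (A * jordanBlock (n + 1) c) i 0 = A i 0 * c := by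
  simp [jordanBlock, mul_apply, Fin.sum_univ_succ]

theorem mul_jordanBlock_apply_succ (c : R) (A : Matrix (Fin (n + 1)) (Fin (n + 1)) R)
    (i : Fin (n + 1)) (j : Fin n) :
    (A * jordanBlock (n + 1) c) i j.succ = A i j.succ * c + A i j.castSucc := by
  rw [mul_apply, Fintype.sum_eq_add j.succ j.castSucc Fin.castSucc_lt_succ.ne']
  · simp [jordanBlock]
  · rintro k ⟨hk₁, hk₂⟩
    have h₁ : (j : ℕ) + 1 ≠ k := fun h => hk₁ (Fin.ext (by simp [h]))
    have h₂ : (j : ℕ) ≠ k := fun h => hk₂ (Fin.ext (by simp [h]))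
    simp [jordanBlock, h₁, h₂]

end Semiring

section Ring

variable {R : Type*} [Ring R] {n : ℕ} {c : R} {A : Matrix (Fin (n + 1)) (Fin (n + 1)) R}

theorem IsSymm.apply_zero_castSucc_eq_zero (hA : A.IsSymm)
    (hAJ : (A * jordanBlock (n + 1) c).IsSymm) (j : Fin n) : A 0 j.castSucc = 0 := by
  have h := hAJ.apply 0 j.succ
  rw [mul_jordanBlock_apply_zero, mul_jordanBlock_apply_succ, hA.apply 0 j.succ] at h
  exact add_eq_left.mp h.symm

theorem IsSymm.apply_castSucc_succ (hA : A.IsSymm)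
    (hAJ : (A * jordanBlock (n + 1) c).IsSymm) (i j : Fin n) :
    A i.castSucc j.succ = A i.succ j.castSucc := by
  have h := hAJ.apply i.succ j.succ
  rw [mul_jordanBlock_apply_succ, mul_jordanBlock_apply_succ, hA.apply i.succ j.succ,
    hA.apply i.castSucc j.succ] at h
  exact add_left_cancel h

end Ring

theorem apply_eq_apply_zero_of_castSucc_succ {α : Type*} {n : ℕ}
    {A : Matrix (Fin (n + 1)) (Fin (n + 1)) α}
    (hshift : ∀ i j : Fin n, A i.castSucc j.succ = A i.succ j.castSucc) :
    ∀ ⦃i j k : Fin (n + 1)⦄, (i : ℕ) + j = k → A i j = A 0 k := by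
  intro i
  induction i using Fin.induction with
  | zero => intro j k h; simp [Fin.ext (by simpa using h)]
  | succ i ih =>
    intro j k h
    rw [Fin.val_succ] at h
    have hj : (j : ℕ) < n := by omega
    rw [show j = (⟨j, hj⟩ : Fin n).castSucc from rfl, ← hshift]
    exact ih (by simp only [Fin.val_succ, Fin.val_castSucc]; omega)

end Matrix

open Matrix

theorem stmt_7_general (l : ℕ) (lam : ℝ)
    (Jl : Matrix (Fin (l + 1)) (Fin (l + 1)) ℝ)
    (hJl : ∀ i j : Fin (l + 1), Jl i j =
      if (j : ℕ) = (i : ℕ) then lam else if (j : ℕ) = (i : ℕ) + 1 then 1 else 0)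
    (A : Matrix (Fin (l + 1)) (Fin (l + 1)) ℝ)
    (hA : Aᵀ = A) (hAJ : (A * Jl)ᵀ = A * Jl) :
    (∀ i j : Fin (l + 1), (i : ℕ) + (j : ℕ) + 1 ≤ l → A i j = 0)
      ∧ (∀ i j : Fin (l + 1), (i : ℕ) + (j : ℕ) = l →
          A i j = A (Fin.last l) ⟨0, Nat.succ_pos l⟩) := by
  obtain rfl : Jl = jordanBlock (l + 1) lam := ext hJl
  have hankel := apply_eq_apply_zero_of_castSucc_succ (IsSymm.apply_castSucc_succ hA hAJ)
  refine ⟨fun i j hij => ?_, fun i j hij => ?_⟩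
  · rw [hankel (k := Fin.castSucc ⟨i + j, by omega⟩) rfl]
    exact IsSymm.apply_zero_castSucc_eq_zero hA hAJ _
  · rw [hankel (k := Fin.last l) hij]
    exact (hankel (k := Fin.last l) (Nat.add_zero l)).symm

/-- Claim 3.1 in the paper: if `A` is symmetric and `A · J_λ` is
symmetric, where `J_λ` is the `(l+1)×(l+1)` Jordan block with eigenvalue `λ < 0`,
then `A` vanishes above the main anti-diagonal and is constant on the main
anti-diagonal. (Entries are 0-indexed: the 1-indexed condition `i + j ≤ l + 1`
becomes `i + j + 1 ≤ l`, and `i + j = l + 2` becomes `i + j = l`.) -/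
theorem stmt_7 (l : ℕ) (lam : ℝ) (hlam : lam < 0)
    (Jl : Matrix (Fin (l + 1)) (Fin (l + 1)) ℝ)
    (hJl : ∀ i j : Fin (l + 1), Jl i j =
      if (j : ℕ) = (i : ℕ) then lam else if (j : ℕ) = (i : ℕ) + 1 then 1 else 0)
    (A : Matrix (Fin (l + 1)) (Fin (l + 1)) ℝ)
    (hA : Aᵀ = A) (hAJ : (A * Jl)ᵀ = A * Jl) :
    (∀ i j : Fin (l + 1), (i : ℕ) + (j : ℕ) + 1 ≤ l → A i j = 0)
      ∧ (∀ i j : Fin (l + 1), (i : ℕ) + (j : ℕ) = l →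
          A i j = A (Fin.last l) ⟨0, Nat.succ_pos l⟩) :=
  stmt_7_general l lam Jl hJl A hA hAJ
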